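/- Let Z_{α,β} be the β-stable process defined by the stochastic integral Z_{α,β}(t) = ∫_{ℝ₊}∫_ℝ (𝔣(ξ,t-s) - 𝔣(ξ,-s)) K(dξ,ds), where 𝔣(x,u) = 1 - e^{-xu} for x,u > 0 and 0 otherwise, and K is a β-stable Lévy basis with control measure α ξ^α dξ ds. Then Z_{α,β} is self-similar with index H = 1 - α/β: for every a > 0, the finite-dimensional distributions of {Z_{α,β}(at)} equal those of {a^{1-α/β} Z_{α,β}(t)}. -/

import Mathlib

open MeasureTheory Real

/-- The kernel 𝔣(x,u) = 1 - e^{-xu} for x,u > 0 and 0 otherwise. -/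
noncomputable def frakf (x u : ℝ) : ℝ :=
  if 0 < x ∧ 0 < u then 1 - Real.exp (-(x * u)) else 0

/-- The stable cumulant factor ω(z; β, c⁺, c⁻) (case β ≠ 1). -/
noncomputable def omegaFactor (β cp cm : ℝ) (z : ℝ) : ℂ :=
  ((Real.Gamma (2 - β) / (1 - β) * ((cp + cm) * Real.cos (Real.pi * β / 2)) : ℝ) : ℂ) -
    Complex.I *
      ((Real.Gamma (2 - β) / (1 - β) *
        ((cp - cm) * Real.sign z * Real.sin (Real.pi * β / 2)) : ℝ) : ℂ)

/-- Joint cumulant functional of (Z_{α,β}(t₁),…,Z_{α,β}(t_m)). -/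
noncomputable def stableCumulant {m : ℕ} (α β cp cm : ℝ) (ζ t : Fin m → ℝ) : ℂ :=
  -∫ ξ in Set.Ioi (0:ℝ), ∫ s : ℝ,
      (((|∑ j, ζ j * (frakf ξ (t j - s) - frakf ξ (-s))| ^ β * (α * ξ ^ (α - β)) : ℝ)) : ℂ) *
        omegaFactor β cp cm (∑ j, ζ j * (frakf ξ (t j - s) - frakf ξ (-s)))

/-! Since `𝔣(ξ, a u) = 𝔣(a ξ, u)`, replacing the times `t` by `a t` is undone by the substitution
`(ξ, s) ↦ (a ξ, s / a)`, which multiplies the measure `ξ ^ (α - β) dξ ds` by `a ^ (β - α)`. On the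
other side, `|z| ^ β ω(z)` is positively homogeneous of degree `β` because `ω` depends on `z` only
through its sign, so scaling `ζ` by `a ^ (1 - α / β)` produces the same factor `a ^ (β - α)`. -/

lemma frakf_mul_snd {a : ℝ} (ha : 0 < a) (x u : ℝ) : frakf x (a * u) = frakf (a * x) u := by
  simp only [frakf, mul_pos_iff_of_pos_left ha, mul_left_comm x a u, mul_assoc]

lemma Real.sign_mul_of_pos {c : ℝ} (hc : 0 < c) (z : ℝ) : Real.sign (c * z) = Real.sign z := by
  rcases lt_trichotomy z 0 with hz | rfl | hz
  · rw [Real.sign_of_neg hz, Real.sign_of_neg (mul_neg_of_pos_of_neg hc hz)]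
  · rw [mul_zero]
  · rw [Real.sign_of_pos hz, Real.sign_of_pos (mul_pos hc hz)]

lemma omegaFactor_mul_of_pos (β cp cm : ℝ) {c : ℝ} (hc : 0 < c) (z : ℝ) :
    omegaFactor β cp cm (c * z) = omegaFactor β cp cm z := by
  rw [omegaFactor, omegaFactor, Real.sign_mul_of_pos hc]

noncomputable def stableExponent (β cp cm z : ℝ) : ℂ :=
  ((|z| ^ β : ℝ) : ℂ) * omegaFactor β cp cm z

lemma stableExponent_mul_of_pos (β cp cm : ℝ) {c : ℝ} (hc : 0 < c) (z : ℝ) :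
    stableExponent β cp cm (c * z) = c ^ β • stableExponent β cp cm z := by
  rw [stableExponent, stableExponent, omegaFactor_mul_of_pos β cp cm hc, abs_mul, abs_of_pos hc,
    mul_rpow hc.le (abs_nonneg z), Complex.ofReal_mul, Complex.real_smul, mul_assoc]

noncomputable def frakfIncrement {m : ℕ} (ζ t : Fin m → ℝ) (ξ s : ℝ) : ℝ :=
  ∑ j, ζ j * (frakf ξ (t j - s) - frakf ξ (-s))

lemma frakfIncrement_mul_time {m : ℕ} (ζ t : Fin m → ℝ) {a : ℝ} (ha : 0 < a) (ξ s : ℝ) :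
    frakfIncrement ζ (fun j => a * t j) ξ s = frakfIncrement ζ t (a * ξ) (a⁻¹ * s) := by
  refine Finset.sum_congr rfl fun j _ => ?_
  rw [show a * t j - s = a * (t j - a⁻¹ * s) by field_simp, show -s = a * -(a⁻¹ * s) by field_simp,
    frakf_mul_snd ha, frakf_mul_snd ha]

lemma frakfIncrement_mul_coeff {m : ℕ} (c : ℝ) (ζ t : Fin m → ℝ) (ξ s : ℝ) :
    frakfIncrement (fun j => c * ζ j) t ξ s = c * frakfIncrement ζ t ξ s := by
  simp only [frakfIncrement, Finset.mul_sum, mul_assoc]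

lemma stableCumulant_eq_integral_stableExponent {m : ℕ} (α β cp cm : ℝ) (ζ t : Fin m → ℝ) :
    stableCumulant α β cp cm ζ t = -∫ ξ in Set.Ioi 0, ∫ s : ℝ,
      ξ ^ (α - β) • ((α : ℂ) * stableExponent β cp cm (frakfIncrement ζ t ξ s)) := by
  simp only [stableCumulant, stableExponent, frakfIncrement, Complex.real_smul]
  congr 1
  refine integral_congr_ae (.of_forall fun ξ => integral_congr_ae (.of_forall fun s => ?_))
  push_cast
  ring

theorem integral_Ioi_integral_rpow_smul_comp_mul {E : Type*} [NormedAddCommGroup E]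
    [NormedSpace ℝ E] {a : ℝ} (ha : 0 < a) (γ : ℝ) (F : ℝ → ℝ → E) :
    ∫ ξ in Set.Ioi 0, ∫ s, ξ ^ γ • F (a * ξ) (a⁻¹ * s) =
      a ^ (-γ) • ∫ ξ in Set.Ioi 0, ∫ s, ξ ^ γ • F ξ s := by
  set G : ℝ → E := fun η => ∫ s, η ^ γ • F η s
  have hinner : ∀ ξ ∈ Set.Ioi (0:ℝ),
      ∫ s, ξ ^ γ • F (a * ξ) (a⁻¹ * s) = (a * a ^ (-γ)) • G (a * ξ) := by
    intro ξ hξ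
    simp only [G, integral_smul]
    rw [Measure.integral_comp_inv_mul_left (F (a * ξ)) a, abs_of_pos ha, smul_smul, smul_smul,
      mul_rpow ha.le (le_of_lt hξ), rpow_neg ha.le]
    congr 1
    field_simp [(rpow_pos_of_pos ha γ).ne']
  rw [setIntegral_congr_fun measurableSet_Ioi hinner, integral_smul,
    integral_comp_mul_left_Ioi G 0 ha, mul_zero, smul_smul]
  congr 1
  field_simp

theorem Z_alpha_beta_self_similar_general
    (α β cp cm : ℝ)
    (hα0 : 0 < α) (hβ1 : 1 + α < β) :
    ∀ a : ℝ, 0 < a → ∀ (m : ℕ) (ζ t : Fin m → ℝ),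
      stableCumulant α β cp cm ζ (fun j => a * t j) =
        stableCumulant α β cp cm (fun j => a ^ (1 - α / β) * ζ j) t := by
  intro a ha m ζ t
  have hH : (a ^ (1 - α / β)) ^ β = a ^ (-(α - β)) := by
    rw [← rpow_mul ha.le]
    congr 1
    field_simp [(show 0 < β by linarith).ne']
    ring
  simp only [stableCumulant_eq_integral_stableExponent, frakfIncrement_mul_time ζ t ha,
    frakfIncrement_mul_coeff, stableExponent_mul_of_pos β cp cm (rpow_pos_of_pos ha _), hH]
  rw [integral_Ioi_integral_rpow_smul_comp_mul ha (α - β)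
    (fun η u => (α : ℂ) * stableExponent β cp cm (frakfIncrement ζ t η u))]
  simp only [mul_smul_comm, smul_comm (_ ^ (α - β)) (a ^ (-(α - β))), integral_smul]

theorem Z_alpha_beta_self_similar
    (α β cp cm : ℝ)
    (hα0 : 0 < α) (hα1 : α < 1) (hβ1 : 1 + α < β) (hβ2 : β < 2)
    (hcp : 0 ≤ cp) (hcm : 0 ≤ cm) (hcpm : 0 < cp + cm) :
    ∀ a : ℝ, 0 < a → ∀ (m : ℕ) (ζ t : Fin m → ℝ),
      stableCumulant α β cp cm ζ (fun j => a * t j) =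
        stableCumulant α β cp cm (fun j => a ^ (1 - α / β) * ζ j) t :=
  Z_alpha_beta_self_similar_general α β cp cm hα0 hβ1
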